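/- Let τ>0. There exists a constant C>0 such that for all u₀, u_π ∈ L²((0,τ);ℂ), the remainder terms R_{τ,0}u₀(z) = 2∫₀^τ Σ_{k∈ℤ, k≠0} ∂_yK(τ−s, z, 2kπ) u₀(s) ds and R_{τ,π}u_π(z) = −2∫₀^τ Σ_{k∈ℤ, k≠0} ∂_yK(τ−s, z, (2k+1)π) u_π(s) ds are well defined and holomorphic on D, and satisfy sup_{z∈D} |R_{τ,0}u₀(z)| ≤ C‖u₀‖_{L²(0,τ)} and sup_{z∈D} |R_{τ,π}u_π(z)| ≤ C‖u_π‖_{L²(0,τ)}; in particular both belong to the Bergman space A²(D). -/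

import Mathlib

open MeasureTheory

/-- The Mehler kernel, extended to a complex spatial variable. -/
noncomputable def mehlerK (t : ℝ) (z y : ℂ) : ℂ :=
  (((Real.sqrt (2 * Real.pi * Real.sinh (2 * t)))⁻¹ : ℝ) : ℂ) *
    Complex.exp (-(((Real.cosh (2 * t) / Real.sinh (2 * t)) : ℝ) : ℂ) * (z ^ 2 + y ^ 2) / 2
      + z * y / ((Real.sinh (2 * t) : ℝ) : ℂ))

/-- Derivative of the Mehler kernel in its second spatial variable. -/
noncomputable def dyK (t : ℝ) (z y : ℂ) : ℂ :=
  (-(((Real.cosh (2 * t) / Real.sinh (2 * t)) : ℝ) : ℂ) * y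
      + z / ((Real.sinh (2 * t) : ℝ) : ℂ)) * mehlerK t z y

/-- The open square with diagonal `(0, π)`. -/
noncomputable def squareD : Set ℂ := {z : ℂ | |z.re - Real.pi / 2| + |z.im| < Real.pi / 2}

/-- Remainder term coming from the images at `2kπ`, `k ≠ 0`. -/
noncomputable def R0 (τ : ℝ) (u0 : ℝ → ℂ) (z : ℂ) : ℂ :=
  2 * ∫ s in Set.Ioo 0 τ,
    ∑' k : {k : ℤ // k ≠ 0}, dyK (τ - s) z (2 * ((k : ℤ) : ℂ) * (Real.pi : ℂ)) * u0 s

/-- Remainder term coming from the images at `(2k+1)π`, `k ≠ 0`. -/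
noncomputable def Rpi (τ : ℝ) (upi : ℝ → ℂ) (z : ℂ) : ℂ :=
  -2 * ∫ s in Set.Ioo 0 τ,
    ∑' k : {k : ℤ // k ≠ 0}, dyK (τ - s) z ((2 * ((k : ℤ) : ℂ) + 1) * (Real.pi : ℂ)) * upi s

open Real
set_option maxHeartbeats 1000000


noncomputable def ddyK (t : ℝ) (z y : ℂ) : ℂ :=
  (1 / ((Real.sinh (2 * t) : ℝ) : ℂ)
    + (-(((Real.cosh (2 * t) / Real.sinh (2 * t)) : ℝ) : ℂ) * y
        + z / ((Real.sinh (2 * t) : ℝ) : ℂ)) *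
      (-(((Real.cosh (2 * t) / Real.sinh (2 * t)) : ℝ) : ℂ) * z
        + y / ((Real.sinh (2 * t) : ℝ) : ℂ))) * mehlerK t z y

noncomputable def Uball : Set ℂ := Metric.ball ((π / 2 : ℝ) : ℂ) (π / 2 + 1 / 8)
noncomputable def betac (τ : ℝ) : ℝ := 1 / (32 * Real.sinh (2 * τ))
noncomputable def Mc (τ : ℝ) : ℝ :=
  1728 * (Real.cosh (2 * τ) + 5) * (Real.sinh (2 * τ) * Real.sqrt (Real.sinh (2 * τ)))
noncomputable def M2c (τ : ℝ) : ℝ :=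
  1728 * (Real.sinh (2 * τ) + 25 * Real.cosh (2 * τ) ^ 2) * Real.sqrt (Real.sinh (2 * τ))

lemma core_ineq (x b Y ch : ℝ) (hx : |x - π / 2| ≤ π / 2 + 1 / 8) (hb : |b| ≤ π / 2 + 1 / 8)
    (hch : 1 ≤ ch) (hY : Y ≤ -π ∨ 2 * π ≤ Y) :
    -ch * (x ^ 2 - b ^ 2 + Y ^ 2) / 2 + x * Y ≤ -Y ^ 2 / 16 := by
  have hπ1 : (3.1415 : ℝ) < π := by linarith [Real.pi_gt_d6]
  have hπ2 : π < 3.1416 := by linarith [Real.pi_lt_d6]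
  obtain ⟨hx1, hx2⟩ := abs_le.mp hx
  obtain ⟨hb1, hb2⟩ := abs_le.mp hb
  have hb2' : b ^ 2 ≤ (π / 2 + 1 / 8) ^ 2 := by nlinarith
  rcases hY with hY | hY
  · have hpos : 0 ≤ x ^ 2 - b ^ 2 + Y ^ 2 := by nlinarith
    have h1 : (x ^ 2 - b ^ 2 + Y ^ 2) / 2 ≤ ch * (x ^ 2 - b ^ 2 + Y ^ 2) / 2 := by nlinarith
    have hxy : x * Y ≤ -Y / 8 := by nlinarith
    nlinarith
  · have hpos : 0 ≤ x ^ 2 - b ^ 2 + Y ^ 2 := by nlinarith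
    have h1 : (x ^ 2 - b ^ 2 + Y ^ 2) / 2 ≤ ch * (x ^ 2 - b ^ 2 + Y ^ 2) / 2 := by nlinarith
    nlinarith [sq_nonneg (Y - 2 * π), sq_nonneg (Y - x)]

lemma exp_re_eval {t : ℝ} (hsh : Real.sinh (2 * t) ≠ 0) (z : ℂ) (Y : ℝ) :
    (-(((Real.cosh (2 * t) / Real.sinh (2 * t)) : ℝ) : ℂ) * (z ^ 2 + ((Y : ℝ) : ℂ) ^ 2) / 2
      + z * ((Y : ℝ) : ℂ) / ((Real.sinh (2 * t) : ℝ) : ℂ)).re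
    = (-(Real.cosh (2 * t)) * (z.re ^ 2 - z.im ^ 2 + Y ^ 2) / 2 + z.re * Y) / Real.sinh (2 * t) := by
  set c := Real.cosh (2 * t)
  set sh := Real.sinh (2 * t)
  simp only [Complex.add_re, Complex.div_re, Complex.mul_re, Complex.mul_im, Complex.neg_re,
    Complex.neg_im, Complex.ofReal_re, Complex.ofReal_im, Complex.add_im,
    Complex.normSq_ofReal, pow_two, Complex.normSq_mk,
    Complex.re_ofNat, Complex.im_ofNat, Complex.normSq_ofNat]
  field_simp
  ring

lemma exp_re_bound (τ : ℝ) {t : ℝ} (ht : t ∈ Set.Ioc 0 τ) {z : ℂ} (hz : z ∈ Uball)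
    {Y : ℝ} (hY : Y ≤ -π ∨ 2 * π ≤ Y) :
    Real.exp ((-(((Real.cosh (2 * t) / Real.sinh (2 * t)) : ℝ) : ℂ) * (z ^ 2 + ((Y : ℝ) : ℂ) ^ 2) / 2
      + z * ((Y : ℝ) : ℂ) / ((Real.sinh (2 * t) : ℝ) : ℂ)).re)
    ≤ (1728 * Real.sinh (2 * t) ^ 3) * Real.exp (-(betac τ) * Y ^ 2) := by
  obtain ⟨ht0, htτ⟩ := ht
  have hsh : 0 < Real.sinh (2 * t) := by positivity
  set sh := Real.sinh (2 * t) with hshdef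
  have hshτ : sh ≤ Real.sinh (2 * τ) := Real.sinh_le_sinh.mpr (by linarith)
  have hch1 : 1 ≤ Real.cosh (2 * t) := Real.one_le_cosh _
  have hπ1 : (3.1415 : ℝ) < π := by linarith [Real.pi_gt_d6]
  -- membership facts
  have hd : ‖z - ((π / 2 : ℝ) : ℂ)‖ < π / 2 + 1 / 8 := by
    simpa [Uball, Metric.mem_ball, Complex.dist_eq] using hz
  have hre : |z.re - π / 2| ≤ π / 2 + 1 / 8 := by
    have := Complex.abs_re_le_norm (z - ((π / 2 : ℝ) : ℂ))
    simp only [Complex.sub_re, Complex.ofReal_re] at this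
    linarith
  have him : |z.im| ≤ π / 2 + 1 / 8 := by
    have := Complex.abs_im_le_norm (z - ((π / 2 : ℝ) : ℂ))
    simp only [Complex.sub_im, Complex.ofReal_im, sub_zero] at this
    linarith
  -- real part estimate
  have hEre : (-(((Real.cosh (2 * t) / Real.sinh (2 * t)) : ℝ) : ℂ) * (z ^ 2 + ((Y : ℝ) : ℂ) ^ 2) / 2
      + z * ((Y : ℝ) : ℂ) / ((Real.sinh (2 * t) : ℝ) : ℂ)).re ≤ -Y ^ 2 / 16 / sh := by
    rw [exp_re_eval hsh.ne' z Y]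
    have hcore := core_ineq z.re z.im Y (Real.cosh (2 * t)) hre him hch1 hY
    calc (-(Real.cosh (2 * t)) * (z.re ^ 2 - z.im ^ 2 + Y ^ 2) / 2 + z.re * Y) / sh
        ≤ (-Y ^ 2 / 16) / sh := by gcongr
      _ = -Y ^ 2 / 16 / sh := by ring
  have hY8 : (8 : ℝ) ≤ Y ^ 2 := by
    rcases hY with h | h <;> nlinarith
  -- split the exponential
  have hsplit : -Y ^ 2 / 16 / sh = -(Y ^ 2 / (32 * sh)) + -(Y ^ 2 / (32 * sh)) := by ring
  have ha : 1 / (4 * sh) ≤ Y ^ 2 / (32 * sh) := by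
    rw [div_le_div_iff₀ (by positivity) (by positivity)]
    nlinarith
  set a := Y ^ 2 / (32 * sh) with hadef
  have ha0 : 0 < a := by positivity
  have hcube : a ^ 3 / 27 ≤ Real.exp a := by
    have h3 := Real.add_one_le_exp (a / 3)
    have hexp3 : Real.exp a = Real.exp (a / 3) ^ 3 := by
      have h9 : a / 3 + a / 3 + a / 3 = a := by ring
      rw [pow_succ, pow_succ, pow_one, ← Real.exp_add, ← Real.exp_add, h9]
    have h5 : (a / 3) ^ 3 ≤ (a / 3 + 1) ^ 3 := pow_le_pow_left₀ (by positivity) (by linarith) 3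
    have h6 : (a / 3 + 1) ^ 3 ≤ (Real.exp (a / 3)) ^ 3 := pow_le_pow_left₀ (by positivity) h3 3
    have h7 : a ^ 3 / 27 = (a / 3) ^ 3 := by ring
    rw [hexp3, h7]; linarith
  have hexp1 : Real.exp (-a) ≤ 1728 * sh ^ 3 := by
    have ha' : 1 ≤ 4 * sh * a := by
      rw [div_le_iff₀ (by positivity)] at ha; linarith
    calc Real.exp (-a) = (Real.exp a)⁻¹ := Real.exp_neg a
      _ ≤ (a ^ 3 / 27)⁻¹ := by
          apply inv_anti₀ (by positivity) hcube
      _ = 27 / a ^ 3 := by ring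
      _ ≤ 1728 * sh ^ 3 := by
          rw [div_le_iff₀ (by positivity)]
          nlinarith [sq_nonneg (4 * sh * a - 1), sq_nonneg (4 * sh * a + 1), mul_pos hsh ha0]
  have hexp2 : Real.exp (-a) ≤ Real.exp (-(betac τ) * Y ^ 2) := by
    apply Real.exp_le_exp.mpr
    have h : (1 / (32 * Real.sinh (2 * τ))) * Y ^ 2 ≤ Y ^ 2 / (32 * sh) := by
      calc (1 / (32 * Real.sinh (2 * τ))) * Y ^ 2 = Y ^ 2 / (32 * Real.sinh (2 * τ)) := by ring
        _ ≤ Y ^ 2 / (32 * sh) := by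
            apply div_le_div_of_nonneg_left (by positivity) (by positivity) (by linarith)
    rw [hadef, betac]
    nlinarith [h]
  calc Real.exp _ ≤ Real.exp (-Y ^ 2 / 16 / sh) := Real.exp_le_exp.mpr hEre
    _ = Real.exp (-a) * Real.exp (-a) := by rw [← Real.exp_add, ← hsplit]
    _ ≤ (1728 * sh ^ 3) * Real.exp (-(betac τ) * Y ^ 2) :=
        mul_le_mul hexp1 hexp2 (Real.exp_pos _).le (by positivity)

lemma norm_dyK_le (τ : ℝ) {t : ℝ} (ht : t ∈ Set.Ioc 0 τ) {z : ℂ} (hz : z ∈ Uball)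
    {Y : ℝ} (hY : Y ≤ -π ∨ 2 * π ≤ Y) :
    ‖dyK t z ((Y : ℝ) : ℂ)‖ ≤ Mc τ * (1 + |Y|) * Real.exp (-(betac τ) * Y ^ 2) := by
  obtain ⟨ht0, htτ⟩ := ht
  have hsh : 0 < Real.sinh (2 * t) := by positivity
  set sh := Real.sinh (2 * t) with hshdef
  have hshτ : sh ≤ Real.sinh (2 * τ) := Real.sinh_le_sinh.mpr (by linarith)
  have hch1 : 1 ≤ Real.cosh (2 * t) := Real.one_le_cosh _
  have hchτ : Real.cosh (2 * t) ≤ Real.cosh (2 * τ) := by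
    rw [Real.cosh_le_cosh, abs_of_pos (by linarith), abs_of_pos (by linarith)]; linarith
  have hπ1 : (3.1415 : ℝ) < π := by linarith [Real.pi_gt_d6]
  have hπ2 : π < 3.1416 := by linarith [Real.pi_lt_d6]
  have hd : ‖z - ((π / 2 : ℝ) : ℂ)‖ < π / 2 + 1 / 8 := by
    simpa [Uball, Metric.mem_ball, Complex.dist_eq] using hz
  have hznorm : ‖z‖ ≤ 5 := by
    have h1 : ‖z‖ ≤ ‖z - ((π / 2 : ℝ) : ℂ)‖ + ‖((π / 2 : ℝ) : ℂ)‖ := by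
      simpa using norm_add_le (z - ((π / 2 : ℝ) : ℂ)) ((π / 2 : ℝ) : ℂ)
    have h2 : ‖((π / 2 : ℝ) : ℂ)‖ = π / 2 := by
      rw [Complex.norm_real, Real.norm_eq_abs, abs_of_pos (by linarith)]
    linarith
  have hEbd := exp_re_bound τ ⟨ht0, htτ⟩ hz hY
  have hpref : ‖-(((Real.cosh (2 * t) / sh : ℝ) : ℂ)) * ((Y : ℝ) : ℂ) + z / ((sh : ℝ) : ℂ)‖
      ≤ (Real.cosh (2 * τ) + 5) * (1 + |Y|) / sh := by
    calc ‖-(((Real.cosh (2 * t) / sh : ℝ) : ℂ)) * ((Y : ℝ) : ℂ) + z / ((sh : ℝ) : ℂ)‖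
        ≤ ‖-(((Real.cosh (2 * t) / sh : ℝ) : ℂ)) * ((Y : ℝ) : ℂ)‖ + ‖z / ((sh : ℝ) : ℂ)‖ :=
          norm_add_le _ _
      _ = (Real.cosh (2 * t) / sh) * |Y| + ‖z‖ / sh := by
          rw [norm_mul, norm_neg, norm_div, Complex.norm_real, Complex.norm_real,
            Complex.norm_real, Real.norm_eq_abs, Real.norm_eq_abs, Real.norm_eq_abs,
            abs_of_pos (by positivity : (0:ℝ) < Real.cosh (2 * t) / sh),
            abs_of_pos hsh]
      _ ≤ (Real.cosh (2 * τ) * |Y| + 5) / sh := by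
          rw [div_mul_eq_mul_div, ← add_div]
          gcongr
      _ ≤ (Real.cosh (2 * τ) + 5) * (1 + |Y|) / sh := by
          gcongr
          nlinarith [abs_nonneg Y, Real.one_le_cosh (2 * τ)]
  have hnormK : ‖mehlerK t z ((Y : ℝ) : ℂ)‖
      ≤ (Real.sqrt sh)⁻¹ * ((1728 * sh ^ 3) * Real.exp (-(betac τ) * Y ^ 2)) := by
    unfold mehlerK
    rw [norm_mul, Complex.norm_real, Real.norm_eq_abs,
      abs_of_nonneg (by positivity : (0:ℝ) ≤ (Real.sqrt (2 * π * sh))⁻¹),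
      Complex.norm_exp]
    have hrle : (Real.sqrt (2 * π * sh))⁻¹ ≤ (Real.sqrt sh)⁻¹ := by
      apply inv_anti₀ (Real.sqrt_pos.mpr hsh)
      apply Real.sqrt_le_sqrt
      nlinarith
    exact mul_le_mul hrle hEbd (Real.exp_pos _).le (by positivity)
  calc ‖dyK t z ((Y : ℝ) : ℂ)‖
      = ‖-(((Real.cosh (2 * t) / sh : ℝ) : ℂ)) * ((Y : ℝ) : ℂ) + z / ((sh : ℝ) : ℂ)‖
        * ‖mehlerK t z ((Y : ℝ) : ℂ)‖ := by rw [dyK, norm_mul]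
    _ ≤ ((Real.cosh (2 * τ) + 5) * (1 + |Y|) / sh)
        * ((Real.sqrt sh)⁻¹ * ((1728 * sh ^ 3) * Real.exp (-(betac τ) * Y ^ 2))) :=
        mul_le_mul hpref hnormK (norm_nonneg _)
          (div_nonneg (mul_nonneg (by nlinarith [Real.cosh_pos (x := 2 * τ)]) (by positivity)) hsh.le)
    _ = 1728 * (Real.cosh (2 * τ) + 5) * (1 + |Y|) * Real.exp (-(betac τ) * Y ^ 2)
        * (sh ^ 3 / (sh * Real.sqrt sh)) := by ring
    _ ≤ Mc τ * (1 + |Y|) * Real.exp (-(betac τ) * Y ^ 2) := by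
        have h2 : Real.sqrt sh * Real.sqrt sh = sh := Real.mul_self_sqrt hsh.le
        have hss : sh ^ 3 / (sh * Real.sqrt sh) = sh * Real.sqrt sh := by
          rw [div_eq_iff (by positivity)]
          linear_combination (-sh ^ 2) * h2
        rw [hss]
        have hs2 : sh * Real.sqrt sh ≤ Real.sinh (2 * τ) * Real.sqrt (Real.sinh (2 * τ)) :=
          mul_le_mul hshτ (Real.sqrt_le_sqrt hshτ) (Real.sqrt_nonneg _) (by linarith)
        have base : 0 ≤ 1728 * (Real.cosh (2 * τ) + 5) * (1 + |Y|) * Real.exp (-(betac τ) * Y ^ 2) := by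
          have b1 : (0:ℝ) ≤ 1728 * (Real.cosh (2 * τ) + 5) := by nlinarith [Real.cosh_pos (x := 2 * τ)]
          exact mul_nonneg (mul_nonneg b1 (by positivity)) (Real.exp_pos _).le
        calc 1728 * (Real.cosh (2 * τ) + 5) * (1 + |Y|) * Real.exp (-(betac τ) * Y ^ 2)
            * (sh * Real.sqrt sh)
            ≤ 1728 * (Real.cosh (2 * τ) + 5) * (1 + |Y|) * Real.exp (-(betac τ) * Y ^ 2)
            * (Real.sinh (2 * τ) * Real.sqrt (Real.sinh (2 * τ))) :=
            mul_le_mul_of_nonneg_left hs2 base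
          _ = Mc τ * (1 + |Y|) * Real.exp (-(betac τ) * Y ^ 2) := by simp only [Mc]; ring

lemma norm_ddyK_le (τ : ℝ) {t : ℝ} (ht : t ∈ Set.Ioc 0 τ) {z : ℂ} (hz : z ∈ Uball)
    {Y : ℝ} (hY : Y ≤ -π ∨ 2 * π ≤ Y) :
    ‖ddyK t z ((Y : ℝ) : ℂ)‖ ≤ M2c τ * (1 + |Y|) ^ 2 * Real.exp (-(betac τ) * Y ^ 2) := by
  obtain ⟨ht0, htτ⟩ := ht
  have hsh : 0 < Real.sinh (2 * t) := by positivity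
  set sh := Real.sinh (2 * t) with hshdef
  have hshτ : sh ≤ Real.sinh (2 * τ) := Real.sinh_le_sinh.mpr (by linarith)
  have hch1 : 1 ≤ Real.cosh (2 * t) := Real.one_le_cosh _
  have hchτ : Real.cosh (2 * t) ≤ Real.cosh (2 * τ) := by
    rw [Real.cosh_le_cosh, abs_of_pos (by linarith), abs_of_pos (by linarith)]; linarith
  have hchτ1 : (1:ℝ) ≤ Real.cosh (2 * τ) := le_trans hch1 hchτ
  have hπ1 : (3.1415 : ℝ) < π := by linarith [Real.pi_gt_d6]
  have hπ2 : π < 3.1416 := by linarith [Real.pi_lt_d6]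
  have hd : ‖z - ((π / 2 : ℝ) : ℂ)‖ < π / 2 + 1 / 8 := by
    simpa [Uball, Metric.mem_ball, Complex.dist_eq] using hz
  have hznorm : ‖z‖ ≤ 5 := by
    have h1 : ‖z‖ ≤ ‖z - ((π / 2 : ℝ) : ℂ)‖ + ‖((π / 2 : ℝ) : ℂ)‖ := by
      simpa using norm_add_le (z - ((π / 2 : ℝ) : ℂ)) ((π / 2 : ℝ) : ℂ)
    have h2 : ‖((π / 2 : ℝ) : ℂ)‖ = π / 2 := by
      rw [Complex.norm_real, Real.norm_eq_abs, abs_of_pos (by linarith)]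
    linarith
  have hEbd := exp_re_bound τ ⟨ht0, htτ⟩ hz hY
  -- first factor bound
  have hP : ‖-(((Real.cosh (2 * t) / sh : ℝ) : ℂ)) * ((Y : ℝ) : ℂ) + z / ((sh : ℝ) : ℂ)‖
      ≤ (Real.cosh (2 * τ) * |Y| + 5) / sh := by
    calc ‖-(((Real.cosh (2 * t) / sh : ℝ) : ℂ)) * ((Y : ℝ) : ℂ) + z / ((sh : ℝ) : ℂ)‖
        ≤ ‖-(((Real.cosh (2 * t) / sh : ℝ) : ℂ)) * ((Y : ℝ) : ℂ)‖ + ‖z / ((sh : ℝ) : ℂ)‖ :=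
          norm_add_le _ _
      _ = (Real.cosh (2 * t) / sh) * |Y| + ‖z‖ / sh := by
          rw [norm_mul, norm_neg, norm_div, Complex.norm_real, Complex.norm_real,
            Complex.norm_real, Real.norm_eq_abs, Real.norm_eq_abs, Real.norm_eq_abs,
            abs_of_pos (by positivity : (0:ℝ) < Real.cosh (2 * t) / sh),
            abs_of_pos hsh]
      _ ≤ (Real.cosh (2 * τ) * |Y| + 5) / sh := by
          rw [div_mul_eq_mul_div, ← add_div]
          gcongr
  have hQ : ‖-(((Real.cosh (2 * t) / sh : ℝ) : ℂ)) * z + ((Y : ℝ) : ℂ) / ((sh : ℝ) : ℂ)‖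
      ≤ (Real.cosh (2 * τ) * 5 + |Y|) / sh := by
    calc ‖-(((Real.cosh (2 * t) / sh : ℝ) : ℂ)) * z + ((Y : ℝ) : ℂ) / ((sh : ℝ) : ℂ)‖
        ≤ ‖-(((Real.cosh (2 * t) / sh : ℝ) : ℂ)) * z‖ + ‖((Y : ℝ) : ℂ) / ((sh : ℝ) : ℂ)‖ :=
          norm_add_le _ _
      _ = (Real.cosh (2 * t) / sh) * ‖z‖ + |Y| / sh := by
          rw [norm_mul, norm_neg, norm_div, Complex.norm_real, Complex.norm_real,
            Complex.norm_real, Real.norm_eq_abs, Real.norm_eq_abs, Real.norm_eq_abs,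
            abs_of_pos (by positivity : (0:ℝ) < Real.cosh (2 * t) / sh),
            abs_of_pos hsh]
      _ ≤ (Real.cosh (2 * τ) * 5 + |Y|) / sh := by
          rw [div_mul_eq_mul_div, ← add_div]
          gcongr
  have habsY : (0:ℝ) ≤ |Y| := abs_nonneg Y
  have hpref : ‖1 / ((sh : ℝ) : ℂ)
      + (-(((Real.cosh (2 * t) / sh : ℝ) : ℂ)) * ((Y : ℝ) : ℂ) + z / ((sh : ℝ) : ℂ)) *
        (-(((Real.cosh (2 * t) / sh : ℝ) : ℂ)) * z + ((Y : ℝ) : ℂ) / ((sh : ℝ) : ℂ))‖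
      ≤ (Real.sinh (2 * τ) + 25 * Real.cosh (2 * τ) ^ 2) * (1 + |Y|) ^ 2 / sh ^ 2 := by
    have hc0 : (0:ℝ) < Real.cosh (2 * τ) := Real.cosh_pos _
    have hS0 : (0:ℝ) < Real.sinh (2 * τ) := lt_of_lt_of_le hsh hshτ
    have h1 : ‖(1 : ℂ) / ((sh : ℝ) : ℂ)‖ = 1 / sh := by
      rw [norm_div, norm_one, Complex.norm_real, Real.norm_eq_abs, abs_of_pos hsh]
    have h2 : ‖(-(((Real.cosh (2 * t) / sh : ℝ) : ℂ)) * ((Y : ℝ) : ℂ) + z / ((sh : ℝ) : ℂ)) *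
        (-(((Real.cosh (2 * t) / sh : ℝ) : ℂ)) * z + ((Y : ℝ) : ℂ) / ((sh : ℝ) : ℂ))‖
        ≤ ((Real.cosh (2 * τ) * |Y| + 5) / sh) * ((Real.cosh (2 * τ) * 5 + |Y|) / sh) := by
      rw [norm_mul]
      exact mul_le_mul hP hQ (norm_nonneg _) (div_nonneg (by nlinarith) hsh.le)
    have key : sh + (Real.cosh (2 * τ) * |Y| + 5) * (Real.cosh (2 * τ) * 5 + |Y|)
        ≤ (Real.sinh (2 * τ) + 25 * Real.cosh (2 * τ) ^ 2) * (1 + |Y|) ^ 2 := by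
      nlinarith [mul_nonneg habsY habsY, mul_nonneg hS0.le habsY,
        mul_nonneg hS0.le (mul_nonneg habsY habsY),
        mul_nonneg (mul_nonneg hc0.le (sub_nonneg.2 hchτ1)) (mul_nonneg habsY habsY),
        mul_nonneg hc0.le (sub_nonneg.2 hchτ1),
        mul_nonneg (mul_nonneg hc0.le hc0.le) habsY,
        mul_nonneg (mul_nonneg (sub_nonneg.2 hchτ1) habsY) hc0.le,
        mul_nonneg (sub_nonneg.2 hchτ1) habsY]
    have h3 : 1 / sh + ((Real.cosh (2 * τ) * |Y| + 5) / sh) * ((Real.cosh (2 * τ) * 5 + |Y|) / sh)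
        = (sh + (Real.cosh (2 * τ) * |Y| + 5) * (Real.cosh (2 * τ) * 5 + |Y|)) / sh ^ 2 := by
      field_simp
    calc ‖1 / ((sh : ℝ) : ℂ)
        + (-(((Real.cosh (2 * t) / sh : ℝ) : ℂ)) * ((Y : ℝ) : ℂ) + z / ((sh : ℝ) : ℂ)) *
          (-(((Real.cosh (2 * t) / sh : ℝ) : ℂ)) * z + ((Y : ℝ) : ℂ) / ((sh : ℝ) : ℂ))‖
        ≤ 1 / sh + ((Real.cosh (2 * τ) * |Y| + 5) / sh) * ((Real.cosh (2 * τ) * 5 + |Y|) / sh) := by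
          have h0 := norm_add_le ((1 : ℂ) / ((sh : ℝ) : ℂ))
            ((-(((Real.cosh (2 * t) / sh : ℝ) : ℂ)) * ((Y : ℝ) : ℂ) + z / ((sh : ℝ) : ℂ)) *
            (-(((Real.cosh (2 * t) / sh : ℝ) : ℂ)) * z + ((Y : ℝ) : ℂ) / ((sh : ℝ) : ℂ)))
          rw [h1] at h0
          linarith
      _ = (sh + (Real.cosh (2 * τ) * |Y| + 5) * (Real.cosh (2 * τ) * 5 + |Y|)) / sh ^ 2 := h3
      _ ≤ (Real.sinh (2 * τ) + 25 * Real.cosh (2 * τ) ^ 2) * (1 + |Y|) ^ 2 / sh ^ 2 := by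
          gcongr
  have hnormK : ‖mehlerK t z ((Y : ℝ) : ℂ)‖
      ≤ (Real.sqrt sh)⁻¹ * ((1728 * sh ^ 3) * Real.exp (-(betac τ) * Y ^ 2)) := by
    unfold mehlerK
    rw [norm_mul, Complex.norm_real, Real.norm_eq_abs,
      abs_of_nonneg (by positivity : (0:ℝ) ≤ (Real.sqrt (2 * π * sh))⁻¹),
      Complex.norm_exp]
    have hrle : (Real.sqrt (2 * π * sh))⁻¹ ≤ (Real.sqrt sh)⁻¹ := by
      apply inv_anti₀ (Real.sqrt_pos.mpr hsh)
      apply Real.sqrt_le_sqrt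
      nlinarith
    exact mul_le_mul hrle hEbd (Real.exp_pos _).le (by positivity)
  calc ‖ddyK t z ((Y : ℝ) : ℂ)‖
      = ‖1 / ((sh : ℝ) : ℂ)
        + (-(((Real.cosh (2 * t) / sh : ℝ) : ℂ)) * ((Y : ℝ) : ℂ) + z / ((sh : ℝ) : ℂ)) *
          (-(((Real.cosh (2 * t) / sh : ℝ) : ℂ)) * z + ((Y : ℝ) : ℂ) / ((sh : ℝ) : ℂ))‖
        * ‖mehlerK t z ((Y : ℝ) : ℂ)‖ := by rw [ddyK, norm_mul]
    _ ≤ ((Real.sinh (2 * τ) + 25 * Real.cosh (2 * τ) ^ 2) * (1 + |Y|) ^ 2 / sh ^ 2)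
        * ((Real.sqrt sh)⁻¹ * ((1728 * sh ^ 3) * Real.exp (-(betac τ) * Y ^ 2))) :=
        mul_le_mul hpref hnormK (norm_nonneg _)
          (div_nonneg (mul_nonneg (by nlinarith) (by positivity)) (by positivity))
    _ = 1728 * (Real.sinh (2 * τ) + 25 * Real.cosh (2 * τ) ^ 2) * (1 + |Y|) ^ 2
        * Real.exp (-(betac τ) * Y ^ 2) * (sh ^ 3 / (sh ^ 2 * Real.sqrt sh)) := by ring
    _ ≤ M2c τ * (1 + |Y|) ^ 2 * Real.exp (-(betac τ) * Y ^ 2) := by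
        have h2 : Real.sqrt sh * Real.sqrt sh = sh := Real.mul_self_sqrt hsh.le
        have hss : sh ^ 3 / (sh ^ 2 * Real.sqrt sh) = Real.sqrt sh := by
          rw [div_eq_iff (by positivity)]
          linear_combination (-sh ^ 2) * h2
        rw [hss]
        have hs2 : Real.sqrt sh ≤ Real.sqrt (Real.sinh (2 * τ)) := Real.sqrt_le_sqrt hshτ
        have base : 0 ≤ 1728 * (Real.sinh (2 * τ) + 25 * Real.cosh (2 * τ) ^ 2) * (1 + |Y|) ^ 2
            * Real.exp (-(betac τ) * Y ^ 2) := by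
          have b1 : (0:ℝ) ≤ 1728 * (Real.sinh (2 * τ) + 25 * Real.cosh (2 * τ) ^ 2) := by nlinarith
          exact mul_nonneg (mul_nonneg b1 (by positivity)) (Real.exp_pos _).le
        calc 1728 * (Real.sinh (2 * τ) + 25 * Real.cosh (2 * τ) ^ 2) * (1 + |Y|) ^ 2
            * Real.exp (-(betac τ) * Y ^ 2) * Real.sqrt sh
            ≤ 1728 * (Real.sinh (2 * τ) + 25 * Real.cosh (2 * τ) ^ 2) * (1 + |Y|) ^ 2
            * Real.exp (-(betac τ) * Y ^ 2) * Real.sqrt (Real.sinh (2 * τ)) :=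
            mul_le_mul_of_nonneg_left hs2 base
          _ = M2c τ * (1 + |Y|) ^ 2 * Real.exp (-(betac τ) * Y ^ 2) := by simp only [M2c]; ring

noncomputable def Bnd (τ : ℝ) (k : {k : ℤ // k ≠ 0}) : ℝ :=
  (Mc τ + M2c τ) *
    ((1 + 10 * |(k.1 : ℝ)|) ^ 2 * Real.exp (-(9 * betac τ) * |(k.1 : ℝ)|))

lemma Mc_nonneg (τ : ℝ) (hτ : 0 < τ) : 0 ≤ Mc τ := by
  have h1 : (0:ℝ) < Real.cosh (2 * τ) := Real.cosh_pos _
  have h2 : (0:ℝ) < Real.sinh (2 * τ) := by positivity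
  have h3 : (0:ℝ) ≤ Real.sqrt (Real.sinh (2 * τ)) := Real.sqrt_nonneg _
  unfold Mc; positivity

lemma M2c_nonneg (τ : ℝ) (hτ : 0 < τ) : 0 ≤ M2c τ := by
  have h1 : (0:ℝ) < Real.cosh (2 * τ) := Real.cosh_pos _
  have h2 : (0:ℝ) < Real.sinh (2 * τ) := by positivity
  unfold M2c; positivity

lemma summable_Bnd (τ : ℝ) (hτ : 0 < τ) : Summable (Bnd τ) := by
  unfold Bnd
  apply Summable.mul_left
  have hS : (0:ℝ) < Real.sinh (2 * τ) := by positivity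
  have hβ : 0 < betac τ := by unfold betac; positivity
  set r := Real.exp (-(9 * betac τ)) with hr
  have hr0 : 0 < r := Real.exp_pos _
  have hr1 : r < 1 := Real.exp_lt_one_iff.mpr (by linarith)
  have hN : Summable (fun n : ℕ => (1 + 10 * (n : ℝ)) ^ 2 * r ^ n) := by
    have h1 := summable_geometric_of_lt_one hr0.le hr1
    have h2 := summable_pow_mul_geometric_of_norm_lt_one 1
      (r := r) (by rwa [Real.norm_eq_abs, abs_of_pos hr0])
    have h3 := summable_pow_mul_geometric_of_norm_lt_one 2
      (r := r) (by rwa [Real.norm_eq_abs, abs_of_pos hr0])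
    apply Summable.congr (h1.add ((h2.mul_left 20).add (h3.mul_left 100)))
    intro n
    push_cast
    ring
  have hZ : Summable (fun k : ℤ => (1 + 10 * |((k : ℤ) : ℝ)|) ^ 2 * r ^ k.natAbs) := by
    apply Summable.of_nat_of_neg
    · apply hN.congr
      intro n
      simp
    · apply hN.congr
      intro n
      simp
  have hsub := hZ.subtype {k : ℤ | k ≠ 0}
  apply Summable.of_nonneg_of_le (fun k => by positivity) _ hsub
  intro k
  simp only [Function.comp_apply]
  have heq : Real.exp (-(9 * betac τ) * |(k.1 : ℝ)|) = r ^ k.1.natAbs := by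
    rw [hr, ← Real.exp_nat_mul]
    congr 1
    rw [Nat.cast_natAbs, Int.cast_abs]
    ring
  rw [heq]

lemma squareD_subset_Uball : squareD ⊆ Uball := by
  intro z hz
  simp only [squareD, Set.mem_setOf_eq] at hz
  simp only [Uball, Metric.mem_ball, Complex.dist_eq]
  have h := Complex.norm_le_abs_re_add_abs_im (z - ((π / 2 : ℝ) : ℂ))
  simp only [Complex.sub_re, Complex.sub_im, Complex.ofReal_re, Complex.ofReal_im, sub_zero] at h
  linarith

lemma ball_subset_Uball {z₀ : ℂ} (hz₀ : z₀ ∈ squareD) : Metric.ball z₀ (1 / 8) ⊆ Uball := by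
  intro w hw
  simp only [Metric.mem_ball] at hw
  simp only [Uball, Metric.mem_ball]
  have h1 : dist z₀ (((π / 2 : ℝ)) : ℂ) < π / 2 := by
    simp only [squareD, Set.mem_setOf_eq] at hz₀
    rw [Complex.dist_eq]
    have h := Complex.norm_le_abs_re_add_abs_im (z₀ - ((π / 2 : ℝ) : ℂ))
    simp only [Complex.sub_re, Complex.sub_im, Complex.ofReal_re, Complex.ofReal_im, sub_zero] at h
    linarith
  calc dist w (((π / 2 : ℝ)) : ℂ) ≤ dist w z₀ + dist z₀ (((π / 2 : ℝ)) : ℂ) := dist_triangle _ _ _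
    _ < π / 2 + 1 / 8 := by linarith

lemma dyK_ddyK_le_Bnd (τ : ℝ) (hτ : 0 < τ) {t : ℝ} (ht : t ∈ Set.Ioc 0 τ) {z : ℂ}
    (hz : z ∈ Uball) (y : {k : ℤ // k ≠ 0} → ℝ)
    (hY : ∀ k, y k ≤ -π ∨ 2 * π ≤ y k)
    (hlb : ∀ k, π * |(k.1 : ℝ)| ≤ |y k|)
    (hub : ∀ k, |y k| ≤ 10 * |(k.1 : ℝ)|) (k : {k : ℤ // k ≠ 0}) :
    ‖dyK t z ((y k : ℝ) : ℂ)‖ ≤ Bnd τ k ∧ ‖ddyK t z ((y k : ℝ) : ℂ)‖ ≤ Bnd τ k := by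
  have hπ1 : (3.1415 : ℝ) < π := by linarith [Real.pi_gt_d6]
  have hk1 : (1:ℝ) ≤ |(k.1 : ℝ)| := by
    have h := Int.one_le_abs k.2
    have h2 : ((1 : ℤ) : ℝ) ≤ ((|k.1| : ℤ) : ℝ) := by exact_mod_cast h
    push_cast at h2
    simpa using h2
  have habs : (0:ℝ) ≤ |(k.1 : ℝ)| := abs_nonneg _
  have hfac : (1 + |y k|) ≤ (1 + 10 * |(k.1 : ℝ)|) ^ 2 := by
    nlinarith [hub k, abs_nonneg (y k)]
  have hfac2 : (1 + |y k|) ^ 2 ≤ (1 + 10 * |(k.1 : ℝ)|) ^ 2 := by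
    have : (1 + |y k|) ≤ (1 + 10 * |(k.1 : ℝ)|) := by nlinarith [hub k]
    exact pow_le_pow_left₀ (by positivity) this 2
  have hexp : Real.exp (-(betac τ) * (y k) ^ 2)
      ≤ Real.exp (-(9 * betac τ) * |(k.1 : ℝ)|) := by
    apply Real.exp_le_exp.mpr
    have hβ : 0 < betac τ := by
      have : (0:ℝ) < Real.sinh (2 * τ) := by positivity
      unfold betac; positivity
    have h2 : (π * |(k.1 : ℝ)|) ^ 2 ≤ |y k| ^ 2 :=
      pow_le_pow_left₀ (by positivity) (hlb k) 2
    have hπ9 : (9:ℝ) ≤ π ^ 2 := by nlinarith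
    have h3 : 9 * |(k.1 : ℝ)| ≤ (y k) ^ 2 := by
      nlinarith [sq_abs (y k), mul_le_mul_of_nonneg_right hk1 habs,
        mul_le_mul_of_nonneg_right hπ9 (mul_nonneg habs habs)]
    nlinarith [h3, hβ]
  have hMc := Mc_nonneg τ hτ
  have hM2c := M2c_nonneg τ hτ
  constructor
  · calc ‖dyK t z ((y k : ℝ) : ℂ)‖ ≤ Mc τ * (1 + |y k|) * Real.exp (-(betac τ) * (y k) ^ 2) :=
        norm_dyK_le τ ht hz (hY k)
      _ ≤ (Mc τ + M2c τ) * ((1 + 10 * |(k.1 : ℝ)|) ^ 2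
          * Real.exp (-(9 * betac τ) * |(k.1 : ℝ)|)) := by
        rw [← mul_assoc]
        apply mul_le_mul _ hexp (Real.exp_pos _).le
        · nlinarith [abs_nonneg (y k), hfac]
        · nlinarith [hfac, abs_nonneg (y k)]
      _ = Bnd τ k := rfl
  · calc ‖ddyK t z ((y k : ℝ) : ℂ)‖
        ≤ M2c τ * (1 + |y k|) ^ 2 * Real.exp (-(betac τ) * (y k) ^ 2) :=
        norm_ddyK_le τ ht hz (hY k)
      _ ≤ (Mc τ + M2c τ) * ((1 + 10 * |(k.1 : ℝ)|) ^ 2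
          * Real.exp (-(9 * betac τ) * |(k.1 : ℝ)|)) := by
        rw [← mul_assoc]
        apply mul_le_mul _ hexp (Real.exp_pos _).le
        · nlinarith [sq_nonneg (1 + |y k|), hfac2]
        · nlinarith [hfac2, sq_nonneg (1 + |y k|)]
      _ = Bnd τ k := rfl

lemma cs_lemma (τ : ℝ) (hτ : 0 < τ) (u : ℝ → ℂ)
    (hu : MemLp u 2 (volume.restrict (Set.Ioo 0 τ))) :
    ∫ s in Set.Ioo 0 τ, ‖u s‖ ≤
      Real.sqrt τ * Real.sqrt (∫ s in Set.Ioo 0 τ, ‖u s‖ ^ 2) := by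
  have hpq : Real.HolderConjugate 2 2 := Real.HolderConjugate.two_two
  have hf : MemLp (fun s => ‖u s‖) (ENNReal.ofReal 2) (volume.restrict (Set.Ioo 0 τ)) := by
    rw [ENNReal.ofReal_ofNat]; exact hu.norm
  have hg : MemLp (fun _ : ℝ => (1 : ℝ)) (ENNReal.ofReal 2) (volume.restrict (Set.Ioo 0 τ)) := by
    rw [ENNReal.ofReal_ofNat]
    exact memLp_const 1
  have h := integral_mul_le_Lp_mul_Lq_of_nonneg (μ := volume.restrict (Set.Ioo 0 τ)) hpq
    (Filter.Eventually.of_forall fun s => norm_nonneg (u s))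
    (Filter.Eventually.of_forall fun _ => zero_le_one) hf hg
  simp only [mul_one] at h
  have h2 : ∀ x : ℝ, x ^ (2 : ℝ) = x ^ 2 := fun x => by
    rw [show (2 : ℝ) = ((2 : ℕ) : ℝ) by norm_num, Real.rpow_natCast]
  simp only [h2, one_pow] at h
  have h3 : ∫ (_ : ℝ) in Set.Ioo 0 τ, (1 : ℝ) = τ := by
    simp [Real.volume_Ioo, ENNReal.toReal_ofReal hτ.le, hτ.le]
  rw [h3] at h
  have h4 : ∀ x : ℝ, x ^ (1 / 2 : ℝ) = Real.sqrt x := fun x => (Real.sqrt_eq_rpow x).symm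
  rw [h4, h4] at h
  linarith

lemma continuousAt_ddyK (z : ℂ) (Y : ℂ) {t : ℝ} (ht : 0 < t) :
    ContinuousAt (fun t => ddyK t z Y) t := by
  have hsh : Real.sinh (2 * t) ≠ 0 := ne_of_gt (by positivity)
  have hshc : ContinuousAt (fun t : ℝ => Real.sinh (2 * t)) t :=
    (Real.continuous_sinh.comp (continuous_const.mul continuous_id)).continuousAt
  have hchc : ContinuousAt (fun t : ℝ => Real.cosh (2 * t)) t :=
    (Real.continuous_cosh.comp (continuous_const.mul continuous_id)).continuousAt
  have hshC : ContinuousAt (fun t : ℝ => ((Real.sinh (2 * t) : ℝ) : ℂ)) t :=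
    Complex.continuous_ofReal.continuousAt.comp hshc
  have hcC : ContinuousAt (fun t : ℝ => ((Real.cosh (2 * t) / Real.sinh (2 * t) : ℝ) : ℂ)) t :=
    Complex.continuous_ofReal.continuousAt.comp (hchc.div hshc hsh)
  have hshC0 : ((Real.sinh (2 * t) : ℝ) : ℂ) ≠ 0 := Complex.ofReal_ne_zero.mpr hsh
  have hsqrt : ContinuousAt
      (fun t : ℝ => (((Real.sqrt (2 * Real.pi * Real.sinh (2 * t)))⁻¹ : ℝ) : ℂ)) t := by
    apply Complex.continuous_ofReal.continuousAt.comp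
    apply ContinuousAt.inv₀
    · exact (Real.continuous_sqrt.continuousAt).comp
        (continuous_const.mul (Real.continuous_sinh.comp
          (continuous_const.mul continuous_id))).continuousAt
    · have : 0 < Real.sinh (2 * t) := by positivity
      positivity
  have hKc : ContinuousAt (fun t => mehlerK t z Y) t := by
    unfold mehlerK
    exact hsqrt.mul (Complex.continuous_exp.continuousAt.comp
      ((((hcC.neg.mul continuousAt_const).div continuousAt_const (by norm_num))).add
        ((continuousAt_const.div hshC hshC0))))
  unfold ddyK
  exact (((continuousAt_const.div hshC hshC0)).add
    ((((hcC.neg.mul continuousAt_const)).add (continuousAt_const.div hshC hshC0)).mul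
      (((hcC.neg.mul continuousAt_const)).add (continuousAt_const.div hshC hshC0)))).mul hKc

lemma hasDerivAt_dyK (t : ℝ) (ht : 0 < t) (Y : ℝ) (z : ℂ) :
    HasDerivAt (fun w => dyK t w (Y : ℂ)) (ddyK t z (Y : ℂ)) z := by
  have hsh : Real.sinh (2 * t) ≠ 0 := ne_of_gt (by positivity)
  set c : ℝ := Real.cosh (2 * t) / Real.sinh (2 * t) with hc
  set sh : ℝ := Real.sinh (2 * t) with hshdef
  have hE : HasDerivAt (fun w : ℂ => -(c : ℂ) * (w ^ 2 + (Y : ℂ) ^ 2) / 2 + w * (Y : ℂ) / (sh : ℂ))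
      (-(c : ℂ) * z + (Y : ℂ) / (sh : ℂ)) z := by
    have h1 : HasDerivAt (fun w : ℂ => w ^ 2) (2 * z) z := by
      simpa using hasDerivAt_pow 2 z
    have h2 : HasDerivAt (fun w : ℂ => -(c : ℂ) * (w ^ 2 + (Y : ℂ) ^ 2) / 2)
        (-(c : ℂ) * (2 * z) / 2) z := ((h1.add_const _).const_mul _).div_const 2
    have h3 : HasDerivAt (fun w : ℂ => w * (Y : ℂ) / (sh : ℂ)) ((Y : ℂ) / (sh : ℂ)) z := by
      simpa using ((hasDerivAt_id z).mul_const (Y : ℂ)).div_const (sh : ℂ)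
    refine (h2.add h3).congr_deriv ?_
    ring
  have hK : HasDerivAt (fun w => mehlerK t w (Y : ℂ))
      ((-(c : ℂ) * z + (Y : ℂ) / (sh : ℂ)) * mehlerK t z (Y : ℂ)) z := by
    have := (hE.cexp).const_mul (((Real.sqrt (2 * Real.pi * sh))⁻¹ : ℝ) : ℂ)
    unfold mehlerK
    refine this.congr_deriv ?_
    ring
  have hP : HasDerivAt (fun w : ℂ => -(c : ℂ) * (Y : ℂ) + w / (sh : ℂ)) (1 / (sh : ℂ)) z := by
    simpa using (((hasDerivAt_id z).div_const (sh : ℂ)).const_add (-(c : ℂ) * (Y : ℂ)))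
  have := hP.mul hK
  unfold dyK ddyK
  refine this.congr_deriv ?_
  ring

lemma continuousAt_dyK (z : ℂ) (Y : ℂ) {t : ℝ} (ht : 0 < t) :
    ContinuousAt (fun t => dyK t z Y) t := by
  have hsh : Real.sinh (2 * t) ≠ 0 := ne_of_gt (by positivity)
  have hshc : ContinuousAt (fun t : ℝ => Real.sinh (2 * t)) t :=
    (Real.continuous_sinh.comp (continuous_const.mul continuous_id)).continuousAt
  have hchc : ContinuousAt (fun t : ℝ => Real.cosh (2 * t)) t :=
    (Real.continuous_cosh.comp (continuous_const.mul continuous_id)).continuousAt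
  have hshC : ContinuousAt (fun t : ℝ => ((Real.sinh (2 * t) : ℝ) : ℂ)) t :=
    Complex.continuous_ofReal.continuousAt.comp hshc
  have hcC : ContinuousAt (fun t : ℝ => ((Real.cosh (2 * t) / Real.sinh (2 * t) : ℝ) : ℂ)) t :=
    Complex.continuous_ofReal.continuousAt.comp (hchc.div hshc hsh)
  have hshC0 : ((Real.sinh (2 * t) : ℝ) : ℂ) ≠ 0 := by
    exact Complex.ofReal_ne_zero.mpr hsh
  have hsqrt : ContinuousAt (fun t : ℝ => (((Real.sqrt (2 * Real.pi * Real.sinh (2 * t)))⁻¹ : ℝ) : ℂ)) t := by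
    apply Complex.continuous_ofReal.continuousAt.comp
    apply ContinuousAt.inv₀
    · exact (Real.continuous_sqrt.continuousAt).comp (continuous_const.mul (Real.continuous_sinh.comp (continuous_const.mul continuous_id))).continuousAt
    · have : 0 < Real.sinh (2 * t) := by positivity
      positivity
  have hKc : ContinuousAt (fun t => mehlerK t z Y) t := by
    unfold mehlerK
    exact hsqrt.mul (Complex.continuous_exp.continuousAt.comp
      ((((hcC.neg.mul continuousAt_const).div continuousAt_const (by norm_num))).add
        ((continuousAt_const.div hshC hshC0))))
  unfold dyK
  exact (((hcC.neg.mul continuousAt_const)).add (continuousAt_const.div hshC hshC0)).mul hKc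

lemma Uball_isOpen : IsOpen Uball := Metric.isOpen_ball
lemma Uball_preconnected : IsPreconnected Uball := (convex_ball _ _).isPreconnected

lemma master (τ : ℝ) (hτ : 0 < τ) (y : {k : ℤ // k ≠ 0} → ℝ)
    (hY : ∀ k, y k ≤ -π ∨ 2 * π ≤ y k)
    (hlb : ∀ k, π * |(k.1 : ℝ)| ≤ |y k|)
    (hub : ∀ k, |y k| ≤ 10 * |(k.1 : ℝ)|)
    (u : ℝ → ℂ) (hu : MemLp u 2 (volume.restrict (Set.Ioo 0 τ))) :
    (∀ z ∈ squareD, ∀ s ∈ Set.Ioo 0 τ,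
      Summable fun k : {k : ℤ // k ≠ 0} => ‖dyK (τ - s) z ((y k : ℝ) : ℂ) * u s‖) ∧
    (∀ z ∈ squareD,
      IntegrableOn (fun s => ∑' k : {k : ℤ // k ≠ 0}, dyK (τ - s) z ((y k : ℝ) : ℂ) * u s)
        (Set.Ioo 0 τ)) ∧
    (∀ z ∈ squareD, DifferentiableAt ℂ
      (fun w => ∫ s in Set.Ioo 0 τ,
        ∑' k : {k : ℤ // k ≠ 0}, dyK (τ - s) w ((y k : ℝ) : ℂ) * u s) z) ∧
    (∀ z ∈ squareD,
      ‖∫ s in Set.Ioo 0 τ, ∑' k : {k : ℤ // k ≠ 0}, dyK (τ - s) z ((y k : ℝ) : ℂ) * u s‖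
        ≤ ((∑' k, Bnd τ k) * Real.sqrt τ) * Real.sqrt (∫ s in Set.Ioo 0 τ, ‖u s‖ ^ 2)) := by
  haveI : IsFiniteMeasure (volume.restrict (Set.Ioo (0 : ℝ) τ)) := by
    constructor
    rw [Measure.restrict_apply_univ, Real.volume_Ioo]
    exact ENNReal.ofReal_lt_top
  have hB := summable_Bnd τ hτ
  have hBnn : ∀ k, 0 ≤ Bnd τ k := fun k =>
    mul_nonneg (add_nonneg (Mc_nonneg τ hτ) (M2c_nonneg τ hτ)) (by positivity)
  have hSnn : 0 ≤ ∑' k, Bnd τ k := tsum_nonneg hBnn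
  have hu1 : Integrable u (volume.restrict (Set.Ioo 0 τ)) :=
    memLp_one_iff_integrable.mp (hu.mono_exponent one_le_two)
  have hum : AEStronglyMeasurable u (volume.restrict (Set.Ioo 0 τ)) := hu.aestronglyMeasurable
  have hts : ∀ s ∈ Set.Ioo (0 : ℝ) τ, τ - s ∈ Set.Ioc (0 : ℝ) τ := fun s hs =>
    ⟨by linarith [hs.2], by linarith [hs.1]⟩
  -- pointwise bounds
  have hb1 : ∀ {z}, z ∈ Uball → ∀ s ∈ Set.Ioo (0:ℝ) τ, ∀ k,
      ‖dyK (τ - s) z ((y k : ℝ) : ℂ)‖ ≤ Bnd τ k := fun {z} hz s hs k =>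
    (dyK_ddyK_le_Bnd τ hτ (hts s hs) hz y hY hlb hub k).1
  have hb2 : ∀ {z}, z ∈ Uball → ∀ s ∈ Set.Ioo (0:ℝ) τ, ∀ k,
      ‖ddyK (τ - s) z ((y k : ℝ) : ℂ)‖ ≤ Bnd τ k := fun {z} hz s hs k =>
    (dyK_ddyK_le_Bnd τ hτ (hts s hs) hz y hY hlb hub k).2
  -- summability of norms
  have hsumn : ∀ {z}, z ∈ Uball → ∀ s ∈ Set.Ioo (0:ℝ) τ,
      Summable fun k : {k : ℤ // k ≠ 0} => ‖dyK (τ - s) z ((y k : ℝ) : ℂ)‖ := by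
    intro z hz s hs
    exact Summable.of_nonneg_of_le (fun k => norm_nonneg _) (hb1 hz s hs) hB
  have hsumn' : ∀ {z}, z ∈ Uball → ∀ s ∈ Set.Ioo (0:ℝ) τ,
      Summable fun k : {k : ℤ // k ≠ 0} => ‖ddyK (τ - s) z ((y k : ℝ) : ℂ)‖ := by
    intro z hz s hs
    exact Summable.of_nonneg_of_le (fun k => norm_nonneg _) (hb2 hz s hs) hB
  have hsum0 : ∀ {z}, z ∈ Uball → ∀ s ∈ Set.Ioo (0:ℝ) τ,
      Summable fun k : {k : ℤ // k ≠ 0} => dyK (τ - s) z ((y k : ℝ) : ℂ) := by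
    intro z hz s hs
    exact (hsumn hz s hs).of_norm
  -- tsum bounds
  have htb : ∀ {z}, z ∈ Uball → ∀ s ∈ Set.Ioo (0:ℝ) τ,
      ‖∑' k : {k : ℤ // k ≠ 0}, dyK (τ - s) z ((y k : ℝ) : ℂ)‖ ≤ ∑' k, Bnd τ k := by
    intro z hz s hs
    calc ‖∑' k : {k : ℤ // k ≠ 0}, dyK (τ - s) z ((y k : ℝ) : ℂ)‖
        ≤ ∑' k : {k : ℤ // k ≠ 0}, ‖dyK (τ - s) z ((y k : ℝ) : ℂ)‖ :=
          norm_tsum_le_tsum_norm (hsumn hz s hs)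
      _ ≤ ∑' k, Bnd τ k := (hsumn hz s hs).tsum_le_tsum (hb1 hz s hs) hB
  have htb' : ∀ {z}, z ∈ Uball → ∀ s ∈ Set.Ioo (0:ℝ) τ,
      ‖∑' k : {k : ℤ // k ≠ 0}, ddyK (τ - s) z ((y k : ℝ) : ℂ)‖ ≤ ∑' k, Bnd τ k := by
    intro z hz s hs
    calc ‖∑' k : {k : ℤ // k ≠ 0}, ddyK (τ - s) z ((y k : ℝ) : ℂ)‖
        ≤ ∑' k : {k : ℤ // k ≠ 0}, ‖ddyK (τ - s) z ((y k : ℝ) : ℂ)‖ :=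
          norm_tsum_le_tsum_norm (hsumn' hz s hs)
      _ ≤ ∑' k, Bnd τ k := (hsumn' hz s hs).tsum_le_tsum (hb2 hz s hs) hB
  -- continuity in s of the tsums
  have hcont : ∀ {z}, z ∈ Uball →
      ContinuousOn (fun s => ∑' k : {k : ℤ // k ≠ 0}, dyK (τ - s) z ((y k : ℝ) : ℂ))
        (Set.Ioo 0 τ) := by
    intro z hz
    rw [continuousOn_iff_continuous_restrict]
    apply continuous_tsum (u := Bnd τ) ?_ hB ?_
    · intro k
      rw [continuous_iff_continuousAt]
      intro s
      have h0 : 0 < τ - (s : ℝ) := by linarith [s.2.2]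
      have h2 : ContinuousAt (fun s : ↥(Set.Ioo (0:ℝ) τ) => τ - (s : ℝ)) s :=
        (continuous_const.sub continuous_subtype_val).continuousAt
      exact ContinuousAt.comp (g := fun t => dyK t z ((y k : ℝ) : ℂ))
        (continuousAt_dyK z ((y k : ℝ) : ℂ) h0) h2
    · intro k s
      exact hb1 hz s.1 s.2 k
  have hcont' : ∀ {z}, z ∈ Uball →
      ContinuousOn (fun s => ∑' k : {k : ℤ // k ≠ 0}, ddyK (τ - s) z ((y k : ℝ) : ℂ))
        (Set.Ioo 0 τ) := by
    intro z hz
    rw [continuousOn_iff_continuous_restrict]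
    apply continuous_tsum (u := Bnd τ) ?_ hB ?_
    · intro k
      rw [continuous_iff_continuousAt]
      intro s
      have h0 : 0 < τ - (s : ℝ) := by linarith [s.2.2]
      have h2 : ContinuousAt (fun s : ↥(Set.Ioo (0:ℝ) τ) => τ - (s : ℝ)) s :=
        (continuous_const.sub continuous_subtype_val).continuousAt
      exact ContinuousAt.comp (g := fun t => ddyK t z ((y k : ℝ) : ℂ))
        (continuousAt_ddyK z ((y k : ℝ) : ℂ) h0) h2
    · intro k s
      exact hb2 hz s.1 s.2 k
  -- measurability of integrands
  have heqz : ∀ z, (fun s => ∑' k : {k : ℤ // k ≠ 0}, dyK (τ - s) z ((y k : ℝ) : ℂ) * u s)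
      = fun s => (∑' k : {k : ℤ // k ≠ 0}, dyK (τ - s) z ((y k : ℝ) : ℂ)) * u s :=
    fun z => funext fun s => tsum_mul_right
  have hmeas : ∀ {z}, z ∈ Uball → AEStronglyMeasurable
      (fun s => ∑' k : {k : ℤ // k ≠ 0}, dyK (τ - s) z ((y k : ℝ) : ℂ) * u s)
      (volume.restrict (Set.Ioo 0 τ)) := by
    intro z hz
    rw [heqz z]
    exact ((hcont hz).aestronglyMeasurable measurableSet_Ioo).mul hum
  have hint : ∀ {z}, z ∈ Uball → Integrable
      (fun s => ∑' k : {k : ℤ // k ≠ 0}, dyK (τ - s) z ((y k : ℝ) : ℂ) * u s)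
      (volume.restrict (Set.Ioo 0 τ)) := by
    intro z hz
    apply Integrable.mono' (hu1.norm.const_mul (∑' k, Bnd τ k)) (hmeas hz)
    filter_upwards [ae_restrict_mem measurableSet_Ioo] with s hs
    rw [show (∑' k : {k : ℤ // k ≠ 0}, dyK (τ - s) z ((y k : ℝ) : ℂ) * u s)
      = (∑' k : {k : ℤ // k ≠ 0}, dyK (τ - s) z ((y k : ℝ) : ℂ)) * u s from tsum_mul_right,
      norm_mul]
    exact mul_le_mul_of_nonneg_right (htb hz s hs) (norm_nonneg _)
  refine ⟨?_, ?_, ?_, ?_⟩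
  · -- summability with u factor
    intro z hz s hs
    have hzU := squareD_subset_Uball hz
    apply Summable.of_nonneg_of_le (fun k => norm_nonneg _) (fun k => ?_)
      (hB.mul_right ‖u s‖)
    rw [norm_mul]
    exact mul_le_mul_of_nonneg_right (hb1 hzU s hs k) (norm_nonneg _)
  · intro z hz
    exact hint (squareD_subset_Uball hz)
  · -- differentiability
    intro z₀ hz₀
    have hz₀U := squareD_subset_Uball hz₀
    have hball := ball_subset_Uball hz₀
    have key := hasDerivAt_integral_of_dominated_loc_of_deriv_le
      (F := fun w s => ∑' k : {k : ℤ // k ≠ 0}, dyK (τ - s) w ((y k : ℝ) : ℂ) * u s)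
      (F' := fun w s => (∑' k : {k : ℤ // k ≠ 0}, ddyK (τ - s) w ((y k : ℝ) : ℂ)) * u s)
      (x₀ := z₀) (s := Metric.ball z₀ (1 / 8)) (bound := fun s => (∑' k, Bnd τ k) * ‖u s‖)
      (μ := volume.restrict (Set.Ioo 0 τ))
      (Metric.ball_mem_nhds z₀ (by norm_num))
      (Filter.eventually_of_mem (Metric.ball_mem_nhds z₀ (by norm_num))
        fun w hw => hmeas (hball hw))
      (hint hz₀U)
      (((hcont' hz₀U).aestronglyMeasurable measurableSet_Ioo).mul hum)
      ?_ ((hu1.norm).const_mul (∑' k, Bnd τ k)) ?_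
    · exact key.2.differentiableAt
    · filter_upwards [ae_restrict_mem measurableSet_Ioo] with s hs
      intro w hw
      rw [norm_mul]
      exact mul_le_mul_of_nonneg_right (htb' (hball hw) s hs) (norm_nonneg _)
    · filter_upwards [ae_restrict_mem measurableSet_Ioo] with s hs
      intro w hw
      have heqw : (fun w => ∑' k : {k : ℤ // k ≠ 0}, dyK (τ - s) w ((y k : ℝ) : ℂ) * u s)
          = fun w => (∑' k : {k : ℤ // k ≠ 0}, dyK (τ - s) w ((y k : ℝ) : ℂ)) * u s :=
        funext fun w => tsum_mul_right
      rw [heqw]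
      apply HasDerivAt.mul_const
      have h0 : 0 < τ - s := by linarith [hs.2]
      exact hasDerivAt_tsum_of_isPreconnected hB Uball_isOpen Uball_preconnected
        (fun k w _ => hasDerivAt_dyK (τ - s) h0 (y k) w)
        (fun k w hw' => hb2 hw' s hs k) hz₀U (hsum0 hz₀U s hs) (hball hw)
  · -- norm bound
    intro z hz
    have hzU := squareD_subset_Uball hz
    have hCS := cs_lemma τ hτ u hu
    calc ‖∫ s in Set.Ioo 0 τ, ∑' k : {k : ℤ // k ≠ 0}, dyK (τ - s) z ((y k : ℝ) : ℂ) * u s‖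
        ≤ ∫ s in Set.Ioo 0 τ, (∑' k, Bnd τ k) * ‖u s‖ := by
          apply norm_integral_le_of_norm_le ((hu1.norm).const_mul (∑' k, Bnd τ k))
          filter_upwards [ae_restrict_mem measurableSet_Ioo] with s hs
          rw [show (∑' k : {k : ℤ // k ≠ 0}, dyK (τ - s) z ((y k : ℝ) : ℂ) * u s)
            = (∑' k : {k : ℤ // k ≠ 0}, dyK (τ - s) z ((y k : ℝ) : ℂ)) * u s from tsum_mul_right,
            norm_mul]
          exact mul_le_mul_of_nonneg_right (htb hzU s hs) (norm_nonneg _)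
      _ = (∑' k, Bnd τ k) * ∫ s in Set.Ioo 0 τ, ‖u s‖ := integral_const_mul _ _
      _ ≤ (∑' k, Bnd τ k) * (Real.sqrt τ * Real.sqrt (∫ s in Set.Ioo 0 τ, ‖u s‖ ^ 2)) :=
          mul_le_mul_of_nonneg_left hCS hSnn
      _ = ((∑' k, Bnd τ k) * Real.sqrt τ) * Real.sqrt (∫ s in Set.Ioo 0 τ, ‖u s‖ ^ 2) := by ring

noncomputable def y0 (k : {k : ℤ // k ≠ 0}) : ℝ := 2 * (k.1 : ℝ) * π
noncomputable def y1 (k : {k : ℤ // k ≠ 0}) : ℝ := (2 * (k.1 : ℝ) + 1) * π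

lemma kcases (k : {k : ℤ // k ≠ 0}) : (1 : ℝ) ≤ (k.1 : ℝ) ∨ (k.1 : ℝ) ≤ -1 := by
  rcases lt_or_gt_of_ne k.2 with h | h
  · right
    have : k.1 ≤ -1 := by omega
    exact_mod_cast this
  · left
    have : 1 ≤ k.1 := h
    exact_mod_cast this

lemma y0_props : (∀ k, y0 k ≤ -π ∨ 2 * π ≤ y0 k) ∧ (∀ k, π * |(k.1 : ℝ)| ≤ |y0 k|)
    ∧ (∀ k, |y0 k| ≤ 10 * |(k.1 : ℝ)|) := by
  have hπ1 : (3.1415 : ℝ) < π := by linarith [Real.pi_gt_d6]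
  have hπ2 : π < 3.1416 := by linarith [Real.pi_lt_d6]
  refine ⟨fun k => ?_, fun k => ?_, fun k => ?_⟩
  · rcases kcases k with h | h
    · right; unfold y0; nlinarith
    · left; unfold y0; nlinarith
  · have habs : |y0 k| = 2 * |(k.1 : ℝ)| * π := by
      unfold y0; rw [abs_mul, abs_mul, abs_two, abs_of_pos Real.pi_pos]
    rw [habs]
    nlinarith [abs_nonneg ((k.1 : ℝ))]
  · have habs : |y0 k| = 2 * |(k.1 : ℝ)| * π := by
      unfold y0; rw [abs_mul, abs_mul, abs_two, abs_of_pos Real.pi_pos]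
    rw [habs]
    nlinarith [abs_nonneg ((k.1 : ℝ))]

lemma y1_props : (∀ k, y1 k ≤ -π ∨ 2 * π ≤ y1 k) ∧ (∀ k, π * |(k.1 : ℝ)| ≤ |y1 k|)
    ∧ (∀ k, |y1 k| ≤ 10 * |(k.1 : ℝ)|) := by
  have hπ1 : (3.1415 : ℝ) < π := by linarith [Real.pi_gt_d6]
  have hπ2 : π < 3.1416 := by linarith [Real.pi_lt_d6]
  have habs : ∀ k, |y1 k| = |2 * (k.1 : ℝ) + 1| * π := by
    intro k; unfold y1; rw [abs_mul, abs_of_pos Real.pi_pos]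
  refine ⟨fun k => ?_, fun k => ?_, fun k => ?_⟩
  · rcases kcases k with h | h
    · right; unfold y1; nlinarith
    · left; unfold y1; nlinarith
  · rw [habs]
    rcases kcases k with h | h
    · rw [abs_of_pos (by linarith : (0:ℝ) < 2 * (k.1 : ℝ) + 1),
        abs_of_pos (by linarith : (0:ℝ) < (k.1 : ℝ))]
      nlinarith
    · rw [abs_of_neg (by linarith : 2 * (k.1 : ℝ) + 1 < 0),
        abs_of_neg (by linarith : (k.1 : ℝ) < 0)]
      nlinarith
  · rw [habs]
    rcases kcases k with h | h
    · rw [abs_of_pos (by linarith : (0:ℝ) < 2 * (k.1 : ℝ) + 1),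
        abs_of_pos (by linarith : (0:ℝ) < (k.1 : ℝ))]
      nlinarith
    · rw [abs_of_neg (by linarith : 2 * (k.1 : ℝ) + 1 < 0),
        abs_of_neg (by linarith : (k.1 : ℝ) < 0)]
      nlinarith

lemma squareD_isOpen : IsOpen squareD :=
  isOpen_lt (((continuous_abs.comp (Complex.continuous_re.sub continuous_const)).add
    (continuous_abs.comp Complex.continuous_im))) continuous_const

lemma squareD_vol : volume squareD < ⊤ := by
  have hsub : squareD ⊆ Metric.ball (0 : ℂ) 5 := by
    intro z hz
    simp only [squareD, Set.mem_setOf_eq] at hz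
    simp only [Metric.mem_ball, Complex.dist_eq, sub_zero]
    have h := Complex.norm_le_abs_re_add_abs_im z
    have h2 : |z.re| ≤ |z.re - π / 2| + π / 2 := by
      have h3 := abs_add_le (z.re - π / 2) (π / 2)
      rw [abs_of_pos (by positivity : (0:ℝ) < π / 2)] at h3
      simpa using h3
    have hπ2 : π < 3.1416 := by linarith [Real.pi_lt_d6]
    linarith [Real.pi_pos]
  exact lt_of_le_of_lt (measure_mono hsub) measure_ball_lt_top

theorem stmt7 (τ : ℝ) (hτ : 0 < τ) :
    ∃ C : ℝ, 0 < C ∧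
      ∀ u0 upi : ℝ → ℂ,
        MemLp u0 2 (volume.restrict (Set.Ioo 0 τ)) →
        MemLp upi 2 (volume.restrict (Set.Ioo 0 τ)) →
        (∀ z ∈ squareD, ∀ s ∈ Set.Ioo 0 τ,
            Summable (fun k : {k : ℤ // k ≠ 0} =>
              ‖dyK (τ - s) z (2 * ((k : ℤ) : ℂ) * (Real.pi : ℂ)) * u0 s‖)
            ∧ Summable (fun k : {k : ℤ // k ≠ 0} =>
              ‖dyK (τ - s) z ((2 * ((k : ℤ) : ℂ) + 1) * (Real.pi : ℂ)) * upi s‖))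
        ∧ (∀ z ∈ squareD,
            IntegrableOn (fun s =>
              ∑' k : {k : ℤ // k ≠ 0}, dyK (τ - s) z (2 * ((k : ℤ) : ℂ) * (Real.pi : ℂ)) * u0 s)
              (Set.Ioo 0 τ)
            ∧ IntegrableOn (fun s =>
              ∑' k : {k : ℤ // k ≠ 0},
                dyK (τ - s) z ((2 * ((k : ℤ) : ℂ) + 1) * (Real.pi : ℂ)) * upi s)
              (Set.Ioo 0 τ))
        ∧ DifferentiableOn ℂ (R0 τ u0) squareD
        ∧ DifferentiableOn ℂ (Rpi τ upi) squareD
        ∧ (∀ z ∈ squareD,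
            ‖R0 τ u0 z‖ ≤ C * Real.sqrt (∫ s in Set.Ioo 0 τ, ‖u0 s‖ ^ 2)
            ∧ ‖Rpi τ upi z‖ ≤ C * Real.sqrt (∫ s in Set.Ioo 0 τ, ‖upi s‖ ^ 2))
        ∧ IntegrableOn (fun z => ‖R0 τ u0 z‖ ^ 2) squareD
        ∧ IntegrableOn (fun z => ‖Rpi τ upi z‖ ^ 2) squareD := by
  have hBnn : ∀ k, 0 ≤ Bnd τ k := fun k =>
    mul_nonneg (add_nonneg (Mc_nonneg τ hτ) (M2c_nonneg τ hτ)) (by positivity)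
  have hSnn : 0 ≤ ∑' k, Bnd τ k := tsum_nonneg hBnn
  have hsτ : 0 ≤ Real.sqrt τ := Real.sqrt_nonneg τ
  refine ⟨2 * ((∑' k, Bnd τ k) * Real.sqrt τ) + 1,
    by nlinarith [mul_nonneg hSnn hsτ], ?_⟩
  intro u0 upi hu0 hupi
  obtain ⟨hY0, hlb0, hub0⟩ := y0_props
  obtain ⟨hY1, hlb1, hub1⟩ := y1_props
  obtain ⟨m0s, m0i, m0d, m0b⟩ := master τ hτ y0 hY0 hlb0 hub0 u0 hu0
  obtain ⟨m1s, m1i, m1d, m1b⟩ := master τ hτ y1 hY1 hlb1 hub1 upi hupi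
  have hc0 : ∀ k : {k : ℤ // k ≠ 0},
      (2 * ((k : ℤ) : ℂ) * (Real.pi : ℂ)) = ((y0 k : ℝ) : ℂ) := by
    intro k; unfold y0; push_cast; ring
  have hc1 : ∀ k : {k : ℤ // k ≠ 0},
      ((2 * ((k : ℤ) : ℂ) + 1) * (Real.pi : ℂ)) = ((y1 k : ℝ) : ℂ) := by
    intro k; unfold y1; push_cast; ring
  have heqR0 : R0 τ u0 = fun w => 2 * ∫ s in Set.Ioo 0 τ,
      ∑' k : {k : ℤ // k ≠ 0}, dyK (τ - s) w ((y0 k : ℝ) : ℂ) * u0 s := by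
    funext w; unfold R0; simp only [hc0]
  have heqRpi : Rpi τ upi = fun w => -2 * ∫ s in Set.Ioo 0 τ,
      ∑' k : {k : ℤ // k ≠ 0}, dyK (τ - s) w ((y1 k : ℝ) : ℂ) * upi s := by
    funext w; unfold Rpi; simp only [hc1]
  have hd0 : DifferentiableOn ℂ (R0 τ u0) squareD := by
    rw [heqR0]
    exact fun z hz => ((m0d z hz).const_mul 2).differentiableWithinAt
  have hd1 : DifferentiableOn ℂ (Rpi τ upi) squareD := by
    rw [heqRpi]
    exact fun z hz => ((m1d z hz).const_mul (-2)).differentiableWithinAt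
  have hb0 : ∀ z ∈ squareD, ‖R0 τ u0 z‖ ≤
      (2 * ((∑' k, Bnd τ k) * Real.sqrt τ) + 1) * Real.sqrt (∫ s in Set.Ioo 0 τ, ‖u0 s‖ ^ 2) := by
    intro z hz
    have hval : R0 τ u0 z = 2 * ∫ s in Set.Ioo 0 τ,
        ∑' k : {k : ℤ // k ≠ 0}, dyK (τ - s) z ((y0 k : ℝ) : ℂ) * u0 s := by
      rw [heqR0]
    rw [hval, norm_mul]
    have h2 : ‖(2 : ℂ)‖ = 2 := by norm_num
    rw [h2]
    have hm := m0b z hz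
    nlinarith [Real.sqrt_nonneg (∫ s in Set.Ioo 0 τ, ‖u0 s‖ ^ 2), mul_nonneg hSnn hsτ]
  have hb1 : ∀ z ∈ squareD, ‖Rpi τ upi z‖ ≤
      (2 * ((∑' k, Bnd τ k) * Real.sqrt τ) + 1) * Real.sqrt (∫ s in Set.Ioo 0 τ, ‖upi s‖ ^ 2) := by
    intro z hz
    have hval : Rpi τ upi z = -2 * ∫ s in Set.Ioo 0 τ,
        ∑' k : {k : ℤ // k ≠ 0}, dyK (τ - s) z ((y1 k : ℝ) : ℂ) * upi s := by
      rw [heqRpi]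
    rw [hval, norm_mul]
    have h2 : ‖(-2 : ℂ)‖ = 2 := by norm_num
    rw [h2]
    have hm := m1b z hz
    nlinarith [Real.sqrt_nonneg (∫ s in Set.Ioo 0 τ, ‖upi s‖ ^ 2), mul_nonneg hSnn hsτ]
  have hDmeas : MeasurableSet squareD := squareD_isOpen.measurableSet
  have hint0 : IntegrableOn (fun z => ‖R0 τ u0 z‖ ^ 2) squareD := by
    have hconst : Integrable (fun _ : ℂ => ((2 * ((∑' k, Bnd τ k) * Real.sqrt τ) + 1)
        * Real.sqrt (∫ s in Set.Ioo 0 τ, ‖u0 s‖ ^ 2)) ^ 2) (volume.restrict squareD) :=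
      integrableOn_const squareD_vol.ne
    apply Integrable.mono' hconst
    · exact ((hd0.continuousOn.norm).pow 2).aestronglyMeasurable hDmeas
    · filter_upwards [ae_restrict_mem hDmeas] with z hz
      rw [Real.norm_eq_abs, abs_of_nonneg (by positivity)]
      exact pow_le_pow_left₀ (norm_nonneg _) (hb0 z hz) 2
  have hint1 : IntegrableOn (fun z => ‖Rpi τ upi z‖ ^ 2) squareD := by
    have hconst : Integrable (fun _ : ℂ => ((2 * ((∑' k, Bnd τ k) * Real.sqrt τ) + 1)
        * Real.sqrt (∫ s in Set.Ioo 0 τ, ‖upi s‖ ^ 2)) ^ 2) (volume.restrict squareD) :=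
      integrableOn_const squareD_vol.ne
    apply Integrable.mono' hconst
    · exact ((hd1.continuousOn.norm).pow 2).aestronglyMeasurable hDmeas
    · filter_upwards [ae_restrict_mem hDmeas] with z hz
      rw [Real.norm_eq_abs, abs_of_nonneg (by positivity)]
      exact pow_le_pow_left₀ (norm_nonneg _) (hb1 z hz) 2
  refine ⟨?_, ?_, hd0, hd1, fun z hz => ⟨hb0 z hz, hb1 z hz⟩, hint0, hint1⟩
  · intro z hz s hs
    constructor
    · simp only [hc0]; exact m0s z hz s hs
    · simp only [hc1]; exact m1s z hz s hs
  · intro z hz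
    constructor
    · simp only [hc0]; exact m0i z hz
    · simp only [hc1]; exact m1i z hz
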